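/- Fix a finite group L, an integer t ≥ 2 and θ ∈ Aut(L). If there exists an odd prime p dividing both t and the order of the fixed-point subgroup L^θ, then the twisted homogeneous rack C_e of class (L, t, θ), where e is the identity of L, is of type D. -/
import Mathlib


/-- A nonempty subset of `X` closed under the operation `op` (a subrack). -/
def IsSubrackOf {X : Type*} (op : X → X → X) (Y : Set X) : Prop :=
  Y.Nonempty ∧ ∀ a ∈ Y, ∀ b ∈ Y, op a b ∈ Y

/-- The rack with underlying set `C ⊆ X` and operation `op` is of type D:
there is a decomposable subrack `R ⊔ S` of `C` and `r ∈ R`, `s ∈ S` with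
`r ▹ (s ▹ (r ▹ s)) ≠ s`. -/
def IsTypeDOn {X : Type*} (op : X → X → X) (C : Set X) : Prop :=
  ∃ R S : Set X, R ⊆ C ∧ S ⊆ C ∧ IsSubrackOf op R ∧ IsSubrackOf op S ∧
    Disjoint R S ∧
    (∀ r ∈ R, ∀ s ∈ S, op r s ∈ S) ∧ (∀ s ∈ S, ∀ r ∈ R, op s r ∈ R) ∧
    ∃ r ∈ R, ∃ s ∈ S, op r (op s (op r s)) ≠ s

/-- The automorphism `u` of `L^t`: `u(ℓ₁, …, ℓ_t) = (θ(ℓ_t), ℓ₁, …, ℓ_{t-1})`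
(indices `0, …, t-1`, so coordinate `0` is `ℓ₁` and coordinate `t-1` is `ℓ_t`). -/
def thrU {L : Type*} [Group L] (θ : L ≃* L) (t : ℕ) (x : Fin t → L) : Fin t → L :=
  fun i => if (i : ℕ) = 0 then θ (x ⟨t - 1, by have := i.2; omega⟩)
    else x ⟨(i : ℕ) - 1, by have := i.2; omega⟩

/-- The rack operation `y ▹ z = y · u(z · y⁻¹)` on `L^t`. -/
def thrOp {L : Type*} [Group L] (θ : L ≃* L) (t : ℕ) (y z : Fin t → L) : Fin t → L :=
  y * thrU θ t (z * y⁻¹)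

/-- The element `(e, …, e, ℓ)` of `L^t`. -/
def thrBase {L : Type*} [Group L] (t : ℕ) (ℓ : L) : Fin t → L :=
  fun i => if (i : ℕ) = t - 1 then ℓ else 1

/-- The twisted conjugacy class (twisted homogeneous rack) of `x ∈ L^t`
with respect to `u`, i.e. the orbit of `x` under `g ⇀ x = g · x · u(g)⁻¹`. -/
def thrClassOf {L : Type*} [Group L] (θ : L ≃* L) (t : ℕ) (x : Fin t → L) :
    Set (Fin t → L) :=
  {y | ∃ g : Fin t → L, g * x * (thrU θ t g)⁻¹ = y}

/-- The twisted homogeneous rack `C_ℓ = C_{(e,…,e,ℓ)}` of class `(L, t, θ)`. -/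
def thrClass {L : Type*} [Group L] (θ : L ≃* L) (t : ℕ) (ℓ : L) : Set (Fin t → L) :=
  thrClassOf θ t (thrBase t ℓ)

/-- The twisted conjugacy class `O^{L,θ}_ℓ = {a·ℓ·θ(a)⁻¹ : a ∈ L}`. -/
def twConjClass {L : Type*} [Group L] (θ : L ≃* L) (ℓ : L) : Set L :=
  {k | ∃ a : L, a * ℓ * (θ a)⁻¹ = k}

section Aux
variable {L : Type*} [Group L]

/-- exponent-level shift mirroring `thrU`. -/
def expShift (p t : ℕ) (a : Fin t → ZMod p) : Fin t → ZMod p :=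
  fun i => if (i : ℕ) = 0 then a ⟨t - 1, by have := i.2; omega⟩
    else a ⟨(i : ℕ) - 1, by have := i.2; omega⟩

/-- coordinatewise powers of `x`. -/
def expMap (x : L) (p t : ℕ) (a : Fin t → ZMod p) : Fin t → L :=
  fun i => x ^ (a i).val

def expLam (p t : ℕ) (a : Fin t → ZMod p) : ZMod p :=
  ∑ i : Fin t, ((i : ℕ) : ZMod p) * a i

lemma pow_val_add {x : L} {p : ℕ} [NeZero p] (hx : orderOf x = p) (m n : ZMod p) :
    x ^ m.val * x ^ n.val = x ^ (m + n).val := by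
  rw [← pow_add, pow_eq_pow_iff_modEq, hx, ZMod.val_add]
  exact (Nat.mod_modEq _ p).symm

lemma pow_val_neg {x : L} {p : ℕ} [NeZero p] (hx : orderOf x = p) (m : ZMod p) :
    (x ^ m.val)⁻¹ = x ^ (-m).val := by
  rw [eq_comm, eq_inv_iff_mul_eq_one, ← pow_add, ← pow_zero x,
    pow_eq_pow_iff_modEq, hx]
  calc (-m).val + m.val ≡ ((-m).val + m.val) % p [MOD p] := (Nat.mod_modEq _ p).symm
    _ = ((-m) + m).val := (ZMod.val_add _ _).symm
    _ = 0 := by simp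

lemma expMap_injective {x : L} {p : ℕ} (hp : p.Prime) (hx : orderOf x = p) (t : ℕ) :
    Function.Injective (expMap x p t) := by
  haveI : NeZero p := ⟨hp.ne_zero⟩
  intro a b h
  funext i
  have h1 : x ^ (a i).val = x ^ (b i).val := congrFun h i
  have h2 : (a i).val ≡ (b i).val [MOD p] := by
    have := pow_eq_pow_iff_modEq.mp h1; rwa [hx] at this
  exact ZMod.val_injective p
    (by rw [← Nat.mod_eq_of_lt (ZMod.val_lt (a i)), ← Nat.mod_eq_of_lt (ZMod.val_lt (b i))]; exact h2)

lemma thrU_expMap (θ : L ≃* L) {x : L} (hθx : θ x = x) {p t : ℕ}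
    (a : Fin t → ZMod p) :
    thrU θ t (expMap x p t a) = expMap x p t (expShift p t a) := by
  funext i
  simp only [thrU, expMap, expShift]
  split
  · rw [map_pow, hθx]
  · rfl

lemma expMap_mul_inv {x : L} {p : ℕ} [NeZero p] (hx : orderOf x = p) {t : ℕ}
    (a b : Fin t → ZMod p) :
    expMap x p t a * (expMap x p t b)⁻¹ = expMap x p t (a - b) := by
  funext i
  simp only [Pi.mul_apply, Pi.inv_apply, expMap, Pi.sub_apply, sub_eq_add_neg,
    pow_val_neg hx, pow_val_add hx]

lemma thrOp_expMap (θ : L ≃* L) {x : L} (hθx : θ x = x) {p : ℕ} [NeZero p]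
    (hx : orderOf x = p) {t : ℕ} (a b : Fin t → ZMod p) :
    thrOp θ t (expMap x p t a) (expMap x p t b)
      = expMap x p t (a + expShift p t (b - a)) := by
  rw [thrOp, expMap_mul_inv hx b a, thrU_expMap θ hθx]
  funext i
  simp only [Pi.mul_apply, Pi.add_apply, expMap, pow_val_add hx]
lemma expShift_succ {p t : ℕ} (a : Fin (t+1) → ZMod p) (i : Fin t) :
    expShift p (t+1) a i.succ = a i.castSucc := by
  simp only [expShift, Fin.val_succ]
  rw [if_neg (by omega)]
  congr 1

lemma expShift_zero {p t : ℕ} (a : Fin (t+1) → ZMod p) :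
    expShift p (t+1) a 0 = a (Fin.last t) := by
  simp [expShift, Fin.last]

lemma sum_expShift {p t : ℕ} (ht : 0 < t) (a : Fin t → ZMod p) :
    ∑ i, expShift p t a i = ∑ i, a i := by
  obtain ⟨t', rfl⟩ : ∃ t', t = t' + 1 := ⟨t - 1, by omega⟩
  rw [Fin.sum_univ_succ (f := fun i => expShift p (t'+1) a i),
    Fin.sum_univ_castSucc (f := a), expShift_zero, add_comm]
  congr 1

lemma expLam_expShift {p t : ℕ} (ht : 0 < t) (hpt : ((t : ℕ) : ZMod p) = 0)
    (a : Fin t → ZMod p) :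
    expLam p t (expShift p t a) = expLam p t a + ∑ i, a i := by
  obtain ⟨t', rfl⟩ : ∃ t', t = t' + 1 := ⟨t - 1, by omega⟩
  have key : expLam p (t'+1) a + ∑ i, a i
      = ∑ i : Fin (t'+1), (((i : ℕ) : ZMod p) + 1) * a i := by
    rw [expLam, ← Finset.sum_add_distrib]
    exact Finset.sum_congr rfl fun i _ => by ring
  rw [key, expLam, Fin.sum_univ_succ (f := fun i => ((i : ℕ) : ZMod p) * expShift p (t'+1) a i),
    Fin.sum_univ_castSucc (f := fun i => (((i : ℕ) : ZMod p) + 1) * a i)]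
  have hlast : (((Fin.last t' : Fin (t'+1)) : ℕ) + 1 : ZMod p) * a (Fin.last t') = 0 := by
    have : (((Fin.last t' : Fin (t'+1)) : ℕ) : ZMod p) + 1 = 0 := by
      rw [Fin.val_last]
      rw [show ((t' : ℕ) : ZMod p) + 1 = ((t' + 1 : ℕ) : ZMod p) by push_cast; ring]
      exact hpt
    rw [this, zero_mul]
  rw [hlast, add_zero]
  simp only [Fin.val_zero, Nat.cast_zero, zero_mul, zero_add]
  refine Finset.sum_congr rfl fun i _ => ?_
  rw [expShift_succ]
  congr 1
  simp [Fin.val_succ]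
lemma expShift_apply_zero {p t : ℕ} (a : Fin t → ZMod p) (i : Fin t) (h : (i : ℕ) = 0) :
    expShift p t a i = a ⟨t - 1, by have := i.2; omega⟩ := by
  simp only [expShift, if_pos h]

lemma expShift_apply_pos {p t : ℕ} (a : Fin t → ZMod p) (i : Fin t) (h : (i : ℕ) ≠ 0) :
    expShift p t a i = a ⟨(i : ℕ) - 1, by have := i.2; omega⟩ := by
  simp only [expShift, if_neg h]

lemma expMap_mem_thrClass (θ : L ≃* L) {x : L} (hθx : θ x = x) {p : ℕ} [NeZero p]
    (hx : orderOf x = p) {t : ℕ} (ht : 0 < t) (a : Fin t → ZMod p)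
    (ha : ∑ i, a i = 0) : expMap x p t a ∈ thrClass θ t 1 := by
  set c : Fin t → ZMod p := fun i =>
    ∑ j ∈ Finset.range ((i : ℕ) + 1), a ⟨j % t, Nat.mod_lt _ ht⟩ with hc
  refine ⟨expMap x p t c, ?_⟩
  have hbase : thrBase t (1 : L) = 1 := by
    funext i; simp [thrBase]
  rw [hbase, mul_one, thrU_expMap θ hθx, expMap_mul_inv hx]
  refine congrArg (expMap x p t) (funext fun i => ?_)
  rw [Pi.sub_apply]
  have hclast : c ⟨t - 1, by omega⟩ = 0 := by
    rw [hc]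
    simp only
    rw [show (t - 1) + 1 = t by omega]
    rw [← Fin.sum_univ_eq_sum_range (fun j => a ⟨j % t, Nat.mod_lt _ ht⟩) t] at *
    rw [← ha]
    exact Finset.sum_congr rfl fun j _ => by congr 1; exact Fin.ext (Nat.mod_eq_of_lt j.2)
  by_cases h0 : (i : ℕ) = 0
  · rw [expShift_apply_zero c i h0, hclast, sub_zero, hc]
    simp only
    rw [h0, Finset.sum_range_one]
    have hidx : (⟨0 % t, Nat.mod_lt _ ht⟩ : Fin t) = i := by
      apply Fin.ext; simp [h0]
    rw [hidx]
  · rw [expShift_apply_pos c i h0, hc]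
    simp only
    rw [show ((i : ℕ) - 1) + 1 = (i : ℕ) by omega, Finset.sum_range_succ]
    rw [add_sub_cancel_left]
    have hidx : (⟨(i : ℕ) % t, Nat.mod_lt _ ht⟩ : Fin t) = i := by
      apply Fin.ext; simp [Nat.mod_eq_of_lt i.2]
    rw [hidx]
end Aux

/-- If an odd prime `p` divides both `t` and `|L^θ|`, then `C_e` is of type D. -/
theorem thrClass_one_isTypeD_of_odd_prime_dvd {L : Type*} [Group L] [Fintype L]
    (θ : L ≃* L) (t : ℕ) (ht : 2 ≤ t) (p : ℕ) (hp : p.Prime) (hpodd : Odd p)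
    (hpt : p ∣ t) (hpL : p ∣ Nat.card {a : L // θ a = a}) :
    IsTypeDOn (thrOp θ t) (thrClass θ t (1 : L)) := by
  classical
  haveI : Fact p.Prime := ⟨hp⟩
  haveI : NeZero p := ⟨hp.ne_zero⟩
  have hp2 : p ≠ 2 := by
    rintro rfl
    have := Nat.odd_iff.mp hpodd
    omega
  have hp3 : 3 ≤ p := by have h2 := hp.two_le; have h3 := Nat.odd_iff.mp hpodd; omega
  have ht0 : 0 < t := by omega
  have h3t : 3 ≤ t := le_trans hp3 (Nat.le_of_dvd ht0 hpt)
  -- Cauchy: an element x of order p fixed by θ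
  let H : Subgroup L :=
    { carrier := {a | θ a = a}
      one_mem' := map_one θ
      mul_mem' := fun {a b} (ha : θ a = a) (hb : θ b = b) =>
        show θ (a * b) = a * b by rw [map_mul, ha, hb]
      inv_mem' := fun {a} (ha : θ a = a) =>
        show θ a⁻¹ = a⁻¹ by rw [map_inv, ha] }
  have hcard : p ∣ Fintype.card H := by
    rw [← Nat.card_eq_fintype_card]
    exact hpL
  obtain ⟨y, hy⟩ := exists_prime_orderOf_dvd_card p hcard
  have hθx : θ (y : L) = (y : L) := y.2
  have hx : orderOf (y : L) = p := by
    rw [← hy]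
    exact orderOf_injective H.subtype H.subtype_injective y
  set x : L := (y : L) with hxdef
  have hpz : ((t : ℕ) : ZMod p) = 0 := (ZMod.natCast_eq_zero_iff t p).mpr hpt
  -- closure facts
  have hop : ∀ a b : Fin t → ZMod p, thrOp θ t (expMap x p t a) (expMap x p t b)
      = expMap x p t (a + expShift p t (b - a)) := fun a b => thrOp_expMap θ hθx hx a b
  have hsum : ∀ a b : Fin t → ZMod p, (∑ i, a i) = 0 → (∑ i, b i) = 0 →
      (∑ i, (a + expShift p t (b - a)) i) = 0 := by
    intro a b ha hb
    have h1 : ∑ i, (a + expShift p t (b - a)) i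
        = (∑ i, a i) + ∑ i, expShift p t (b - a) i := by
      simp [Finset.sum_add_distrib]
    have h2 : ∑ i, (b - a) i = (∑ i, b i) - ∑ i, a i := by
      simp [Finset.sum_sub_distrib]
    rw [h1, sum_expShift ht0, h2, ha, hb]
    ring
  have hlam : ∀ a b : Fin t → ZMod p, (∑ i, a i) = 0 → (∑ i, b i) = 0 →
      expLam p t (a + expShift p t (b - a)) = expLam p t b := by
    intro a b ha hb
    have h1 : expLam p t (a + expShift p t (b - a))
        = expLam p t a + expLam p t (expShift p t (b - a)) := by
      simp [expLam, mul_add, Finset.sum_add_distrib]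
    have h2 : expLam p t (b - a) = expLam p t b - expLam p t a := by
      simp [expLam, mul_sub, Finset.sum_sub_distrib]
    have h3 : ∑ i, (b - a) i = (∑ i, b i) - ∑ i, a i := by
      simp [Finset.sum_sub_distrib]
    rw [h1, expLam_expShift ht0 hpz, h2, h3, ha, hb]
    ring
  -- generic closure of the pieces
  have hmaps : ∀ c d : ZMod p,
      ∀ r ∈ expMap x p t '' {a | (∑ i, a i) = 0 ∧ expLam p t a = c},
      ∀ s ∈ expMap x p t '' {a | (∑ i, a i) = 0 ∧ expLam p t a = d},
      thrOp θ t r s ∈ expMap x p t '' {a | (∑ i, a i) = 0 ∧ expLam p t a = d} := by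
    rintro c d r ⟨a, ⟨ha1, ha2⟩, rfl⟩ s ⟨b, ⟨hb1, hb2⟩, rfl⟩
    rw [hop a b]
    exact ⟨_, ⟨hsum a b ha1 hb1, by rw [hlam a b ha1 hb1, hb2]⟩, rfl⟩
  -- the special exponent vector b0 and the zero vector
  let z : Fin t → ZMod p := fun _ => 0
  have hz : (∑ i, z i) = 0 ∧ expLam p t z = 0 := by
    constructor
    · simp [z]
    · simp [expLam, z]
  let b0 : Fin t → ZMod p := fun i => if (i : ℕ) = 1 then 1 else if (i : ℕ) = 0 then -1 else 0
  have hsplit : b0 = (fun i => if i = (⟨1, by omega⟩ : Fin t) then (1 : ZMod p) else 0)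
      + (fun i => if i = (⟨0, by omega⟩ : Fin t) then -1 else 0) := by
    funext i
    by_cases h1 : (i : ℕ) = 1
    · simp [b0, h1, Pi.add_apply, Fin.ext_iff]
    · by_cases h0 : (i : ℕ) = 0
      · simp [b0, h1, h0, Pi.add_apply, Fin.ext_iff]
      · simp [b0, h1, h0, Pi.add_apply, Fin.ext_iff]
  have hb0sum : (∑ i, b0 i) = 0 := by
    rw [hsplit]
    simp [Finset.sum_add_distrib, Finset.sum_ite_eq']
  have hb0lam : expLam p t b0 = 1 := by
    rw [expLam, hsplit]
    simp [mul_add, mul_ite, Finset.sum_add_distrib, Finset.sum_ite_eq']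
  -- assemble
  refine ⟨expMap x p t '' {a | (∑ i, a i) = 0 ∧ expLam p t a = 0},
    expMap x p t '' {a | (∑ i, a i) = 0 ∧ expLam p t a = 1},
    ?_, ?_, ⟨⟨_, ⟨z, hz, rfl⟩⟩, hmaps 0 0⟩, ⟨⟨_, ⟨b0, ⟨hb0sum, hb0lam⟩, rfl⟩⟩, hmaps 1 1⟩,
    ?_, hmaps 0 1, hmaps 1 0, ?_⟩
  · rintro r ⟨a, ⟨ha1, _⟩, rfl⟩
    exact expMap_mem_thrClass θ hθx hx ht0 a ha1
  · rintro s ⟨a, ⟨ha1, _⟩, rfl⟩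
    exact expMap_mem_thrClass θ hθx hx ht0 a ha1
  · -- disjoint
    rw [Set.disjoint_left]
    rintro r ⟨a, ⟨_, ha2⟩, rfl⟩ ⟨b, ⟨_, hb2⟩, hEq⟩
    have hab : b = a := expMap_injective hp hx t hEq
    haveI : Fact (1 < p) := ⟨hp.one_lt⟩
    rw [hab, ha2] at hb2
    exact one_ne_zero hb2.symm
  · -- the inequality
    refine ⟨_, ⟨z, hz, rfl⟩, _, ⟨b0, ⟨hb0sum, hb0lam⟩, rfl⟩, ?_⟩
    rw [hop, hop, hop]
    intro hEq
    have h := expMap_injective hp hx t hEq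
    have h2 := congrFun h (⟨2, by omega⟩ : Fin t)
    have hσ2 : ∀ f : Fin t → ZMod p,
        expShift p t f ⟨2, by omega⟩ = f ⟨1, by omega⟩ := by
      intro f
      rw [expShift_apply_pos _ _ (by norm_num)]
      exact congrArg f (Fin.ext (by norm_num))
    have hσ1 : ∀ f : Fin t → ZMod p,
        expShift p t f ⟨1, by omega⟩ = f ⟨0, by omega⟩ := by
      intro f
      rw [expShift_apply_pos _ _ (by norm_num)]
      exact congrArg f (Fin.ext (by norm_num))
    have hσ0 : ∀ f : Fin t → ZMod p,
        expShift p t f ⟨0, by omega⟩ = f ⟨t - 1, by omega⟩ := by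
      intro f
      rw [expShift_apply_zero _ _ (by norm_num)]
    have hb0_2 : b0 ⟨2, by omega⟩ = 0 := by
      simp [b0]
    have hb0_1 : b0 ⟨1, by omega⟩ = 1 := by
      simp [b0]
    have hb0_0 : b0 ⟨0, by omega⟩ = -1 := by
      simp [b0]
    have hb0_last : b0 ⟨t - 1, by omega⟩ = 0 := by
      simp only [b0]
      rw [if_neg (by omega), if_neg (by omega)]
    have hz_any : ∀ j : Fin t, z j = 0 := fun j => rfl
    simp only [Pi.add_apply, Pi.sub_apply, hσ2, hσ1, hσ0, hz_any, hb0_2, hb0_1, hb0_0,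
      hb0_last] at h2
    -- h2 should now be an equation in ZMod p forcing (2 : ZMod p) = 0
    have h4 : ((2 : ℕ) : ZMod p) = 0 := by push_cast; linear_combination h2
    have h5 : p ∣ 2 := (ZMod.natCast_eq_zero_iff 2 p).mp h4
    have := Nat.le_of_dvd (by norm_num) h5
    omega
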